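/- The abelianization of the binary icosahedral group P_120 = ⟨A, B | AB^2A = BAB, BA^2B = ABA⟩ is the trivial group; equivalently, P_120 is a perfect group. -/

import Mathlib

/-- Relators for the binary icosahedral group
`P₁₂₀ = ⟨A, B | AB²A = BAB, BA²B = ABA⟩`, with generator `0 = A`, `1 = B`. -/
def p120Rels : Set (FreeGroup (Fin 2)) :=
  {FreeGroup.of 0 * FreeGroup.of 1 ^ 2 * FreeGroup.of 0 *
     (FreeGroup.of 1 * FreeGroup.of 0 * FreeGroup.of 1)⁻¹,
   FreeGroup.of 1 * FreeGroup.of 0 ^ 2 * FreeGroup.of 1 *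
     (FreeGroup.of 0 * FreeGroup.of 1 * FreeGroup.of 0)⁻¹}

/-- The binary icosahedral group `P₁₂₀`. -/
abbrev P120 := PresentedGroup p120Rels

/-! In a commutative group the relation `a b² a = b a b` reads `a² b² = a b²`, forcing `a = 1`.
Both defining relations of `P₁₂₀` have this shape (with `A, B` swapped in the second), so every
homomorphism from `P₁₂₀` to a commutative group kills both generators; applied to the
abelianization map this shows `P₁₂₀ᵃᵇ = 1`, whose kernel is the commutator subgroup. -/

theorem eq_one_of_mul_sq_mul_eq_mul_mul {G : Type*} [CommGroup G] {a b : G}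
    (h : a * b ^ 2 * a = b * a * b) : a = 1 := by
  have h' : a * b ^ 2 * a = a * b ^ 2 := by rw [h, mul_comm b a, mul_assoc, ← sq]
  exact mul_eq_left.mp h'

namespace P120

open PresentedGroup

theorem of_zero_mul_of_one_sq_mul_of_zero :
    (of 0 : P120) * of 1 ^ 2 * of 0 = of 1 * of 0 * of 1 :=
  mul_inv_eq_one.mp (one_of_mem (Set.mem_insert _ _))

theorem of_one_mul_of_zero_sq_mul_of_one :
    (of 1 : P120) * of 0 ^ 2 * of 1 = of 0 * of 1 * of 0 :=
  mul_inv_eq_one.mp (one_of_mem (Set.mem_insert_of_mem _ rfl))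

theorem monoidHom_eq_one {G : Type*} [CommGroup G] (f : P120 →* G) : f = 1 := by
  have hA : f (of 0) = 1 := eq_one_of_mul_sq_mul_eq_mul_mul <| by
    simpa only [map_mul, map_pow] using congrArg f of_zero_mul_of_one_sq_mul_of_zero
  have hB : f (of 1) = 1 := eq_one_of_mul_sq_mul_eq_mul_mul <| by
    simpa only [map_mul, map_pow] using congrArg f of_one_mul_of_zero_sq_mul_of_one
  refine PresentedGroup.ext fun i => ?_
  fin_cases i
  exacts [hA, hB]

end P120

/-- The abelianization of `P₁₂₀` is trivial; equivalently, `P₁₂₀` is perfect. -/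
theorem abelianization_P120_trivial :
    (∀ g : Abelianization P120, g = 1) ∧ commutator P120 = ⊤ := by
  have hof : (Abelianization.of : P120 →* Abelianization P120) = 1 := P120.monoidHom_eq_one _
  constructor
  · intro g
    obtain ⟨x, rfl⟩ := QuotientGroup.mk_surjective g
    exact DFunLike.congr_fun hof x
  · rw [← Abelianization.ker_of, hof, MonoidHom.ker_one]
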